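/- arXiv:2205.05035 — 2 statements merged into one kernel-verified Lean document; each statement's English description precedes it below -/
import Mathlib

section
/- Let 𝔳 = {ν_i}_{i∈I} be a totally ordered set in V such that every f ∈ K[x] is 𝔳-stable. Define ν = sup_{i∈I} ν_i : K[x] → Γ ∪ {∞} by ν(f) = ν_{i_f}(f). Then ν is a valuation on K[x] with ν_i(f) ≤ ν(f) for every i ∈ I and every f ∈ K[x]. Moreover, if ν' ∈ V satisfies ν' ≤ ν and ν_i ≤ ν' for every i ∈ I, then ν' = ν. -/
open Polynomial

/-- An additive valuation (possibly with nontrivial support) on a commutative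
ring `R`, with values in `Γ ∪ {∞}`. -/
structure ValOn (R : Type*) [CommRing R] (Γ : Type*) [AddCommGroup Γ] [LinearOrder Γ] [IsOrderedAddMonoid Γ] where
  v : R → WithTop Γ
  v_zero : v 0 = ⊤
  v_one : v 1 = 0
  v_mul : ∀ a b, v (a * b) = v a + v b
  min_le_v_add : ∀ a b, min (v a) (v b) ≤ v (a + b)

namespace ValOn

variable {R : Type*} [CommRing R] {Γ : Type*} [AddCommGroup Γ] [LinearOrder Γ] [IsOrderedAddMonoid Γ]

theorem v_neg (w : ValOn R Γ) (a : R) : w.v (-a) = w.v a := by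
  have h1 : w.v (-1) + w.v (-1) = 0 := by
    rw [← w.v_mul]; norm_num [w.v_one]
  have h2 : w.v (-1) = 0 := by
    cases hx : w.v (-1) with
    | top => rw [hx] at h1; simp at h1
    | coe x =>
        rw [hx, ← WithTop.coe_add, ← WithTop.coe_zero, WithTop.coe_inj] at h1
        have hx0 : x = 0 := by
          rcases lt_trichotomy x 0 with hc | hc | hc
          · exact absurd h1 (ne_of_lt (add_neg hc hc))
          · exact hc
          · exact absurd h1 (ne_of_gt (add_pos hc hc))
        rw [hx0, WithTop.coe_zero]
  calc w.v (-a) = w.v (-1 * a) := by rw [neg_one_mul]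
  _ = w.v a := by rw [w.v_mul, h2, zero_add]

theorem le_v_sum (w : ValOn R Γ) {α : Type*} {γ : WithTop Γ} (s : Finset α) (h : α → R)
    (H : ∀ t ∈ s, γ ≤ w.v (h t)) : γ ≤ w.v (∑ t ∈ s, h t) := by
  classical
  induction s using Finset.induction_on with
  | empty => simp [w.v_zero]
  | insert _ _ hx ih =>
      rw [Finset.sum_insert hx]
      refine le_trans ?_ (w.min_le_v_add _ _)
      rw [le_min_iff]
      exact ⟨H _ (Finset.mem_insert_self _ _),
        ih fun t ht => H t (Finset.mem_insert_of_mem ht)⟩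

theorem lt_v_sum (w : ValOn R Γ) {α : Type*} {γ : WithTop Γ} (hγ : γ ≠ ⊤) (s : Finset α)
    (h : α → R) (H : ∀ t ∈ s, γ < w.v (h t)) : γ < w.v (∑ t ∈ s, h t) := by
  classical
  induction s using Finset.induction_on with
  | empty => simp [w.v_zero]; exact lt_top_iff_ne_top.mpr hγ
  | insert _ _ hx ih =>
      rw [Finset.sum_insert hx]
      refine lt_of_lt_of_le ?_ (w.min_le_v_add _ _)
      rw [lt_min_iff]
      exact ⟨H _ (Finset.mem_insert_self _ _),
        ih fun t ht => H t (Finset.mem_insert_of_mem ht)⟩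

/-- The subring `⊕_{γ ∈ Γ} P_γ` of the monoid algebra `R[Γ]`, where
`P_γ = {f : γ ≤ v f}`.  The graded ring `G_v = ⊕_γ P_γ/P_γ⁺` is realized below as the
quotient of this subring by the ideal `⊕_γ P_γ⁺`. -/
def gradedCarrier (w : ValOn R Γ) : Subring (AddMonoidAlgebra R Γ) where
  carrier := {s | ∀ γ : Γ, (γ : WithTop Γ) ≤ w.v (s.coeff γ)}
  zero_mem' := by intro γ; simp [w.v_zero]
  one_mem' := by
    intro γ
    classical
    show (γ : WithTop Γ) ≤ w.v ((AddMonoidAlgebra.single (0:Γ) (1:R)).coeff γ)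
    rw [AddMonoidAlgebra.coeff_single, Finsupp.single_apply]
    split_ifs with h
    · subst h; simp [w.v_one]
    · simp [w.v_zero]
  add_mem' := by
    intro a b ha hb γ
    refine le_trans ?_ (w.min_le_v_add _ _)
    exact le_min (ha γ) (hb γ)
  neg_mem' := by
    intro a ha γ
    show (γ : WithTop Γ) ≤ w.v ((-a).coeff γ)
    rw [AddMonoidAlgebra.coeff_neg, Finsupp.neg_apply, w.v_neg]
    exact ha γ
  mul_mem' := by
    classical
    intro a b ha hb γ
    rw [AddMonoidAlgebra.mul_apply]
    rw [Finsupp.sum]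
    refine w.le_v_sum _ _ (fun α hα => ?_)
    rw [Finsupp.sum]
    refine w.le_v_sum _ _ (fun β hβ => ?_)
    split_ifs with h
    · subst h
      rw [w.v_mul, WithTop.coe_add]
      exact add_le_add (ha α) (hb β)
    · simp [w.v_zero]

/-- The ideal `⊕_{γ ∈ Γ} P_γ⁺` of `gradedCarrier w`. -/
def gradedIdeal (w : ValOn R Γ) : Ideal (gradedCarrier w) where
  carrier := {s | ∀ γ : Γ, (γ : WithTop Γ) < w.v ((s : AddMonoidAlgebra R Γ).coeff γ)}
  zero_mem' := by intro γ; simp [w.v_zero]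
  add_mem' := by
    intro a b ha hb γ
    refine lt_of_lt_of_le ?_ (w.min_le_v_add _ _)
    exact lt_min (ha γ) (hb γ)
  smul_mem' := by
    classical
    intro c x hx γ
    rw [smul_eq_mul]
    show (γ : WithTop Γ) < w.v (((c : AddMonoidAlgebra R Γ) * (x : AddMonoidAlgebra R Γ)).coeff γ)
    rw [AddMonoidAlgebra.mul_apply, Finsupp.sum]
    refine w.lt_v_sum (WithTop.coe_ne_top) _ _ (fun α hα => ?_)
    rw [Finsupp.sum]
    refine w.lt_v_sum (WithTop.coe_ne_top) _ _ (fun β hβ => ?_)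
    split_ifs with h
    · subst h
      rw [w.v_mul, WithTop.coe_add]
      exact WithTop.add_lt_add_of_le_of_lt WithTop.coe_ne_top (c.2 α) (hx β)
    · simp [w.v_zero]
end ValOn

/-- The graded ring `G_w = ⊕_{γ} P_γ/P_γ⁺` associated to the valuation `w`,
realized as a quotient. -/
abbrev Graded {R : Type*} [CommRing R] {Γ : Type*} [AddCommGroup Γ] [LinearOrder Γ] [IsOrderedAddMonoid Γ]
    (w : ValOn R Γ) : Type _ :=
  (ValOn.gradedCarrier w) ⧸ (ValOn.gradedIdeal w)

namespace ValOn

variable {R : Type*} [CommRing R] {Γ : Type*} [AddCommGroup Γ] [LinearOrder Γ] [IsOrderedAddMonoid Γ]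

/-- `inv_w f`, the initial form (image of `f` in the homogeneous component
`P_{v f}/P_{v f}⁺` of the graded ring), with `inv_w f = 0` when `f ∈ supp w`. -/
noncomputable def initialForm (w : ValOn R Γ) (f : R) : Graded w :=
  if h : w.v f = ⊤ then 0
  else Ideal.Quotient.mk (gradedIdeal w)
    ⟨AddMonoidAlgebra.single ((w.v f).untop h) f, by
      intro γ
      classical
      show (γ : WithTop Γ) ≤ w.v ((AddMonoidAlgebra.single ((w.v f).untop h) f).coeff γ)
      rw [AddMonoidAlgebra.coeff_single, Finsupp.single_apply]
      split_ifs with hh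
      · rw [← hh, WithTop.coe_untop]
      · simp [w.v_zero]⟩

theorem gradedCarrier_mono {w₁ w₂ : ValOn R Γ} (h : ∀ f, w₁.v f ≤ w₂.v f) :
    gradedCarrier w₁ ≤ gradedCarrier w₂ :=
  fun s hs γ => (hs γ).trans (h _)

/-- The homomorphism `φ : G_{w₁} → G_{w₂}` of graded rings, for `w₁ ≤ w₂`:
it sends `inv_{w₁} f` to `inv_{w₂} f` if `w₁ f = w₂ f` and to `0` if `w₁ f < w₂ f`. -/
noncomputable def phi (w₁ w₂ : ValOn R Γ) (h : ∀ f, w₁.v f ≤ w₂.v f) :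
    Graded w₁ →+* Graded w₂ :=
  Ideal.Quotient.lift (gradedIdeal w₁)
    ((Ideal.Quotient.mk (gradedIdeal w₂)).comp (Subring.inclusion (gradedCarrier_mono h)))
    (by
      intro a ha
      rw [RingHom.comp_apply, Ideal.Quotient.eq_zero_iff_mem]
      exact fun γ => lt_of_lt_of_le (ha γ) (h _))

end ValOn


open ValOn

section PolyDefs

variable {K : Type*} [Field K] {Γ : Type*} [AddCommGroup Γ] [LinearOrder Γ] [IsOrderedAddMonoid Γ]

/-- A polynomial `f` is `𝔳`-stable for a family `𝔳 = (ν_i)_{i ∈ I}` if the values `ν_i(f)`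
eventually stabilize. -/
def Stable {I : Type*} [Preorder I] (ν : I → ValOn (Polynomial K) Γ) (f : Polynomial K) : Prop :=
  ∃ i : I, ∀ j : I, i ≤ j → (ν j).v f = (ν i).v f

/-- The truncation `w_q` of `w` at `q`:
`w_q(f) = min_j w(f_j q^j)` where `f = ∑ f_j q^j` is the `q`-expansion of `f`
(for monic non-constant `q`, the `j`-th coefficient of the `q`-expansion is
`(f /ₘ q^j) %ₘ q`, and all the nonzero coefficients occur for `j ≤ natDegree f`). -/
noncomputable def truncVal (w : ValOn (Polynomial K) Γ) (q f : Polynomial K) : WithTop Γ :=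
  (Finset.range (f.natDegree + 1)).inf' Finset.nonempty_range_add_one
    (fun j => w.v (((f /ₘ q ^ j) %ₘ q) * q ^ j))

/-- `δ(f) = max {ν̄(x - a) : a a root of f}` for a polynomial over an algebraically closed
field, with the convention `δ(f) = ⊥ = -∞` when `f` has no roots (e.g. `deg f = 0`). -/
noncomputable def deltaOf {F : Type*} [Field F] (wbar : ValOn (Polynomial F) Γ)
    (f : Polynomial F) : WithBot (WithTop Γ) :=
  (f.roots.map (fun a => ((wbar.v (X - C a) : WithTop Γ) : WithBot (WithTop Γ)))).sup

/-- `δ(f)` of `f ∈ K[x]`, computed via the fixed extension `ν̄` of `ν` to `K̄[x]`. -/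
noncomputable def delta (wbar : ValOn (Polynomial (AlgebraicClosure K)) Γ)
    (f : Polynomial K) : WithBot (WithTop Γ) :=
  deltaOf wbar (f.map (algebraMap K (AlgebraicClosure K)))

/-- `Q` is a key polynomial (of level `δ(Q)`) for the valuation `ν` (with fixed extension
`ν̄` to `K̄[x]`): `Q` is monic and `δ(f) ≥ δ(Q) → deg f ≥ deg Q` for every nonzero `f`. -/
def IsKeyPoly (wbar : ValOn (Polynomial (AlgebraicClosure K)) Γ) (Q : Polynomial K) : Prop :=
  Q.Monic ∧ ∀ f : Polynomial K, f ≠ 0 → delta wbar Q ≤ delta wbar f → Q.degree ≤ f.degree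

/-- `Ψ_n`: the set of key polynomials of degree `n`. -/
def Psi (wbar : ValOn (Polynomial (AlgebraicClosure K)) Γ) (n : ℕ) : Set (Polynomial K) :=
  {Q | IsKeyPoly wbar Q ∧ Q.natDegree = n}

/-- The set `K_n = {f : ν_Q(f) < ν(f) for all Q ∈ Ψ_n}`. -/
def LimitSet (w : ValOn (Polynomial K) Γ) (wbar : ValOn (Polynomial (AlgebraicClosure K)) Γ)
    (n : ℕ) : Set (Polynomial K) :=
  {f | ∀ Q ∈ Psi wbar n, truncVal w Q f < w.v f}

/-- A limit key polynomial for `Ψ_n`: a monic polynomial in `K_n` of least degree. -/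
def IsLimitKeyPoly (w : ValOn (Polynomial K) Γ)
    (wbar : ValOn (Polynomial (AlgebraicClosure K)) Γ) (n : ℕ) (Qn : Polynomial K) : Prop :=
  Qn.Monic ∧ Qn ∈ LimitSet w wbar n ∧ ∀ g ∈ LimitSet w wbar n, Qn.degree ≤ g.degree

/-- `g` is `𝔳`-stable for the family `𝔳 = (ν_Q)_{Q ∈ Ψ_n}`, ordered by `Q ⪯ Q' ↔ ν_Q ≤ ν_{Q'}`. -/
def PsiStable (w : ValOn (Polynomial K) Γ) (wbar : ValOn (Polynomial (AlgebraicClosure K)) Γ)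
    (n : ℕ) (g : Polynomial K) : Prop :=
  ∃ Q ∈ Psi wbar n, ∀ Q' ∈ Psi wbar n,
    (∀ h : Polynomial K, truncVal w Q h ≤ truncVal w Q' h) → truncVal w Q' g = truncVal w Q g

/-- `v` is a Krull valuation: its support is trivial. -/
def IsKrullVal (v : Polynomial K → WithTop Γ) : Prop :=
  ∀ f : Polynomial K, f ≠ 0 → v f ≠ ⊤

/-- The quotient group `v(K[x])/ν₀K` is a torsion group: every value of `v` has a positive
multiple lying in the value group of `ν₀`. -/
def TorsionOverBase (ν₀ : ValOn K Γ) (v : Polynomial K → WithTop Γ) : Prop :=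
  ∀ f : Polynomial K, f ≠ 0 → ∃ m : ℕ, 0 < m ∧ ∃ a : K, a ≠ 0 ∧ m • v f = ν₀.v a

/-- `v` (a valuation on `K[x]` extending `ν₀`) is residue-transcendental: it is Krull and the
residue field extension `K(x)v ∣ Kν₀` is transcendental, i.e. there are `f, g` with
`v f = v g` whose residue `res(f/g)` is transcendental over `Kν₀`: every polynomial over
`Kν₀` (with coefficients `res(c_i)`, not all zero) does not vanish at `res(f/g)`. -/
def ResidueTranscendental (ν₀ : ValOn K Γ) (v : Polynomial K → WithTop Γ) : Prop :=
  IsKrullVal v ∧ ∃ f g : Polynomial K, f ≠ 0 ∧ g ≠ 0 ∧ v f = v g ∧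
    ∀ (n : ℕ) (c : ℕ → K), (∀ i, 0 ≤ ν₀.v (c i)) → (∃ i, i ≤ n ∧ ν₀.v (c i) = 0) →
      v (∑ i ∈ Finset.range (n + 1), Polynomial.C (c i) * f ^ i * g ^ (n - i)) = v (g ^ n)

/-- `v` is value-transcendental: it is not Krull, or `v(K[x])/ν₀K` is not torsion. -/
def ValueTranscendental (ν₀ : ValOn K Γ) (v : Polynomial K → WithTop Γ) : Prop :=
  ¬ IsKrullVal v ∨ ¬ TorsionOverBase ν₀ v

/-- `v` is valuation-transcendental. -/
def ValuationTranscendental (ν₀ : ValOn K Γ) (v : Polynomial K → WithTop Γ) : Prop :=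
  ValueTranscendental ν₀ v ∨ ResidueTranscendental ν₀ v

/-- `v` is valuation-algebraic. -/
def ValuationAlgebraic (ν₀ : ValOn K Γ) (v : Polynomial K → WithTop Γ) : Prop :=
  ¬ ValuationTranscendental ν₀ v

end PolyDefs

/-! Any finitely many elements are simultaneously stable from some index on, so each
valuation axiom for the eventual value `ν(f) = ν_{i_f}(f)` is inherited from a single `ν_j`.
Minimality: `ν(f)` is itself a value `ν_{i_f}(f) ≤ ν'(f)`. -/

namespace ValOn

section EventualVal

variable {R : Type*} [CommRing R] {Γ : Type*} [AddCommGroup Γ] [LinearOrder Γ]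
  [IsOrderedAddMonoid Γ] {I : Type*} [Preorder I] (ν : I → ValOn R Γ)
  (hstab : ∀ f : R, ∃ i : I, ∀ j : I, i ≤ j → (ν j).v f = (ν i).v f)

noncomputable def eventualVal (f : R) : WithTop Γ :=
  (ν (hstab f).choose).v f

theorem eventually_v_eq_eventualVal (f : R) :
    ∀ᶠ j in Filter.atTop, (ν j).v f = eventualVal ν hstab f :=
  (Filter.eventually_ge_atTop _).mono (hstab f).choose_spec

variable [IsDirected I (· ≤ ·)] [Nonempty I]

theorem eventualVal_eq_of_stable {f : R} {i : I}
    (hi : ∀ j : I, i ≤ j → (ν j).v f = (ν i).v f) : eventualVal ν hstab f = (ν i).v f := by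
  obtain ⟨j, hj, hij⟩ :=
    ((eventually_v_eq_eventualVal ν hstab f).and (Filter.eventually_ge_atTop i)).exists
  rw [← hj, hi j hij]

theorem le_eventualVal (hmono : ∀ i j : I, i ≤ j → ∀ f : R, (ν i).v f ≤ (ν j).v f)
    (i : I) (f : R) : (ν i).v f ≤ eventualVal ν hstab f := by
  obtain ⟨j, hj, hij⟩ :=
    ((eventually_v_eq_eventualVal ν hstab f).and (Filter.eventually_ge_atTop i)).exists
  exact hj ▸ hmono i j hij f

noncomputable def stableLimit : ValOn R Γ where
  v := eventualVal ν hstab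
  v_zero := (ν _).v_zero
  v_one := (ν _).v_one
  v_mul a b := by
    obtain ⟨j, hab, ha, hb⟩ := ((eventually_v_eq_eventualVal ν hstab (a * b)).and
      ((eventually_v_eq_eventualVal ν hstab a).and (eventually_v_eq_eventualVal ν hstab b))).exists
    rw [← hab, ← ha, ← hb, (ν j).v_mul]
  min_le_v_add a b := by
    obtain ⟨j, hab, ha, hb⟩ := ((eventually_v_eq_eventualVal ν hstab (a + b)).and
      ((eventually_v_eq_eventualVal ν hstab a).and (eventually_v_eq_eventualVal ν hstab b))).exists
    rw [← hab, ← ha, ← hb]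
    exact (ν j).min_le_v_add a b

theorem v_eq_stableLimit_of_le {w : ValOn R Γ} (hle : ∀ f, w.v f ≤ (stableLimit ν hstab).v f)
    (hge : ∀ (i : I) (f : R), (ν i).v f ≤ w.v f) : w.v = (stableLimit ν hstab).v :=
  funext fun f => (hle f).antisymm (hge _ f)

end EventualVal

end ValOn

theorem sup_of_stable_family_is_valuation_general
    {K : Type*} [Field K] {Γ : Type*} [AddCommGroup Γ] [LinearOrder Γ] [IsOrderedAddMonoid Γ]
    {I : Type*} [LinearOrder I] [Nonempty I]
    (ν₀ : ValOn K Γ) (ν : I → ValOn (Polynomial K) Γ)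
    (hext : ∀ (i : I) (a : K), (ν i).v (Polynomial.C a) = ν₀.v a)
    (hmono : ∀ i j : I, i ≤ j → ∀ f : Polynomial K, (ν i).v f ≤ (ν j).v f)
    (hstab : ∀ f : Polynomial K, Stable ν f) :
    ∃ w : ValOn (Polynomial K) Γ,
      (∀ a : K, w.v (Polynomial.C a) = ν₀.v a) ∧
      (∀ (f : Polynomial K) (i : I), (∀ j : I, i ≤ j → (ν j).v f = (ν i).v f) →
        w.v f = (ν i).v f) ∧
      (∀ (i : I) (f : Polynomial K), (ν i).v f ≤ w.v f) ∧
      (∀ w' : ValOn (Polynomial K) Γ, (∀ a : K, w'.v (Polynomial.C a) = ν₀.v a) →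
        (∀ f : Polynomial K, w'.v f ≤ w.v f) →
        (∀ (i : I) (f : Polynomial K), (ν i).v f ≤ w'.v f) → w'.v = w.v) :=
  ⟨stableLimit ν hstab, fun a => hext _ a,
    fun _ _ hi => eventualVal_eq_of_stable ν hstab hi,
    le_eventualVal ν hstab hmono,
    fun _ _ hle hge => v_eq_stableLimit_of_le ν hstab hle hge⟩

/-- If every `f` is `𝔳`-stable, then `ν = sup ν_i`, defined by
`ν(f) = ν_{i_f}(f)`, is a valuation on `K[x]` dominating every `ν_i`, and is the least
such: any `ν' ∈ V` with `ν' ≤ ν` and `ν_i ≤ ν'` for all `i` equals `ν`. -/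
theorem sup_of_stable_family_is_valuation
    {K : Type*} [Field K] {Γ : Type*} [AddCommGroup Γ] [LinearOrder Γ] [IsOrderedAddMonoid Γ]
    {I : Type*} [LinearOrder I] [Nonempty I]
    (ν₀ : ValOn K Γ) (ν : I → ValOn (Polynomial K) Γ)
    (hext : ∀ (i : I) (a : K), (ν i).v (Polynomial.C a) = ν₀.v a)
    (hmono : ∀ i j : I, i ≤ j → ∀ f : Polynomial K, (ν i).v f ≤ (ν j).v f)
    (hstrict : ∀ i j : I, i < j → ∃ f : Polynomial K, (ν i).v f < (ν j).v f)
    (hstab : ∀ f : Polynomial K, Stable ν f) :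
    ∃ w : ValOn (Polynomial K) Γ,
      (∀ a : K, w.v (Polynomial.C a) = ν₀.v a) ∧
      (∀ (f : Polynomial K) (i : I), (∀ j : I, i ≤ j → (ν j).v f = (ν i).v f) →
        w.v f = (ν i).v f) ∧
      (∀ (i : I) (f : Polynomial K), (ν i).v f ≤ w.v f) ∧
      (∀ w' : ValOn (Polynomial K) Γ, (∀ a : K, w'.v (Polynomial.C a) = ν₀.v a) →
        (∀ f : Polynomial K, w'.v f ≤ w.v f) →
        (∀ (i : I) (f : Polynomial K), (ν i).v f ≤ w'.v f) → w'.v = w.v) :=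
  sup_of_stable_family_is_valuation_general ν₀ ν hext hmono hstab
end

section
/- Let ν be a valuation on K[x], let n ∈ ℕ be such that Ψ_n ≠ ∅ and {ν(Q) : Q ∈ Ψ_n} has no maximal element, and let Q_n be a limit key polynomial for Ψ_n. If f ∈ K[x] satisfies deg(f) < deg(Q_n), then there exists Q_f ∈ Ψ_n such that ν_{Q_f}(f) = ν_{Q_n}(f) = ν(f); moreover, ν_Q(f) = ν_{Q_f}(f) for every Q ∈ Ψ_n with ν_{Q_f} ≤ ν_Q. -/
open Polynomial

open ValOn

/-!
Since `deg f < deg Q_n` and `Q_n` has least degree in `K_n`, `f ∉ K_n`: some `Q_f ∈ Ψ_n` has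
`ν(f) ≤ ν_{Q_f}(f)`. A truncation at a monic non-constant polynomial never exceeds `ν`, so
`ν_{Q_f}(f) = ν(f)`, and `ν_{Q_n}(f) = ν(f)` because `f` is its own `Q_n`-expansion. For
`ν_{Q_f} ≤ ν_Q` the value `ν_Q(f)` is squeezed between `ν_{Q_f}(f) = ν(f)` and `ν(f)`.
The degree `n` is positive because `1 ∈ Ψ_0` and `ν_1 = ∞` would make `K_0` empty.
-/

theorem Polynomial.divByMonic_divByMonic {R : Type*} [CommRing R] {q r : R[X]}
    (hq : q.Monic) (hr : r.Monic) (p : R[X]) : p /ₘ q /ₘ r = p /ₘ (q * r) := by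
  nontriviality R
  refine ((div_modByMonic_unique (p /ₘ q /ₘ r) (p %ₘ q + q * (p /ₘ q %ₘ r)) (hq.mul hr)
    ⟨?_, ?_⟩).1).symm
  · calc p %ₘ q + q * (p /ₘ q %ₘ r) + q * r * (p /ₘ q /ₘ r)
        = p %ₘ q + q * (p /ₘ q %ₘ r + r * (p /ₘ q /ₘ r)) := by ring
      _ = p := by rw [modByMonic_add_div, modByMonic_add_div]
  · rw [hr.degree_mul]
    refine (degree_add_le _ _).trans_lt (max_lt ?_ ?_)
    · exact (degree_modByMonic_lt p hq).trans_le
        (le_add_of_nonneg_right (zero_le_degree_iff.mpr hr.ne_zero))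
    · rw [mul_comm, hq.degree_mul, add_comm]
      exact WithBot.add_lt_add_left (degree_ne_bot.mpr hq.ne_zero) (degree_modByMonic_lt _ hr)

section Truncation

variable {K : Type*} [Field K] {Γ : Type*} [AddCommGroup Γ] [LinearOrder Γ] [IsOrderedAddMonoid Γ]
  (w : ValOn K[X] Γ) {q : K[X]}

theorem truncVal_one (f : K[X]) : truncVal w 1 f = ⊤ :=
  top_le_iff.mp <| Finset.le_inf' _ _ fun j _ => by rw [modByMonic_one, zero_mul, w.v_zero]

theorem truncVal_of_degree_lt (hq : q.Monic) {f : K[X]} (hf : f.degree < q.degree) :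
    truncVal w q f = w.v f := by
  have hterm_zero : f /ₘ q ^ 0 %ₘ q * q ^ 0 = f := by
    rw [pow_zero, divByMonic_one, (modByMonic_eq_self_iff hq).mpr hf, mul_one]
  refine le_antisymm ?_ (Finset.le_inf' _ _ fun j _ => ?_)
  · exact (Finset.inf'_le _ (Finset.mem_range.mpr f.natDegree.succ_pos)).trans_eq (congrArg w.v hterm_zero)
  · rcases j.eq_zero_or_pos with rfl | hj
    · rw [hterm_zero]
    · have hq_le : q.degree ≤ (q ^ j).degree :=
        degree_le_of_dvd (dvd_pow_self q hj.ne') (hq.pow j).ne_zero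
      rw [(divByMonic_eq_zero_iff (hq.pow j)).mpr (hf.trans_le hq_le), zero_modByMonic,
        zero_mul, w.v_zero]
      exact le_top

theorem truncVal_le_term (hq : q.Monic) (hq_pos : 0 < q.natDegree) (f : K[X]) (j : ℕ) :
    truncVal w q f ≤ w.v (f /ₘ q ^ j %ₘ q * q ^ j) := by
  by_cases hj : j ≤ f.natDegree
  · exact Finset.inf'_le _ (Finset.mem_range.mpr (Nat.lt_succ_of_le hj))
  · have hf_lt : f.degree < (q ^ j).degree := by
      refine degree_lt_degree ?_
      rw [hq.natDegree_pow]
      nlinarith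
    rw [(divByMonic_eq_zero_iff (hq.pow j)).mpr hf_lt, zero_modByMonic, zero_mul, w.v_zero]
    exact le_top

/-- The `(j+1)`-st term of the `q`-expansion of `f` is `q` times the `j`-th term of that of
`f /ₘ q`. -/
theorem truncVal_le_add_truncVal_divByMonic (hq : q.Monic) (hq_pos : 0 < q.natDegree)
    (f : K[X]) : truncVal w q f ≤ w.v q + truncVal w q (f /ₘ q) := by
  obtain ⟨j, -, hj⟩ := Finset.exists_mem_eq_inf' Finset.nonempty_range_add_one
    (fun j => w.v (f /ₘ q /ₘ q ^ j %ₘ q * q ^ j))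
  have hterm : f /ₘ q ^ (j + 1) %ₘ q * q ^ (j + 1) = q * (f /ₘ q /ₘ q ^ j %ₘ q * q ^ j) := by
    rw [divByMonic_divByMonic hq (hq.pow j), ← pow_succ', pow_succ]
    ring
  calc truncVal w q f ≤ w.v (f /ₘ q ^ (j + 1) %ₘ q * q ^ (j + 1)) :=
        truncVal_le_term w hq hq_pos f (j + 1)
    _ = w.v q + truncVal w q (f /ₘ q) := by rw [hterm, w.v_mul, truncVal, hj]

theorem truncVal_le (hq : q.Monic) (hq_pos : 0 < q.natDegree) (f : K[X]) :
    truncVal w q f ≤ w.v f := by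
  by_cases hf : f.degree < q.degree
  · exact (truncVal_of_degree_lt w hq hf).le
  have hdeg : q.natDegree ≤ f.natDegree := natDegree_le_natDegree (not_lt.mp hf)
  have hdiv : truncVal w q (f /ₘ q) ≤ w.v (f /ₘ q) := truncVal_le hq hq_pos (f /ₘ q)
  have hmod : truncVal w q f ≤ w.v (f %ₘ q) := by
    simpa [divByMonic_one] using truncVal_le_term w hq hq_pos f 0
  calc truncVal w q f ≤ min (w.v (f %ₘ q)) (w.v (q * (f /ₘ q))) := by
        refine le_min hmod ((truncVal_le_add_truncVal_divByMonic w hq hq_pos f).trans ?_)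
        rw [w.v_mul]
        gcongr
    _ ≤ w.v f := by
        refine (w.min_le_v_add _ _).trans_eq ?_
        rw [modByMonic_add_div f q]
termination_by f.natDegree
decreasing_by rw [natDegree_divByMonic f hq]; omega

end Truncation

section KeyPolynomials

variable {K : Type*} [Field K] {Γ : Type*} [AddCommGroup Γ] [LinearOrder Γ] [IsOrderedAddMonoid Γ]
  {w : ValOn K[X] Γ} {wbar : ValOn (AlgebraicClosure K)[X] Γ} {n : ℕ} {Qn : K[X]}

theorem one_mem_Psi_zero : (1 : K[X]) ∈ Psi wbar 0 :=
  ⟨⟨monic_one, fun _ hf _ => by rw [degree_one]; exact zero_le_degree_iff.mpr hf⟩, natDegree_one⟩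

theorem truncVal_le_of_mem_Psi (hn : 0 < n) {Q : K[X]} (hQ : Q ∈ Psi wbar n) (f : K[X]) :
    truncVal w Q f ≤ w.v f :=
  truncVal_le w hQ.1.1 (hQ.2 ▸ hn) f

theorem IsLimitKeyPoly.pos (hQn : IsLimitKeyPoly w wbar n Qn) : 0 < n := by
  refine Nat.pos_of_ne_zero fun hn => ?_
  subst hn
  have h := hQn.2.1 1 one_mem_Psi_zero
  rw [truncVal_one] at h
  exact not_top_lt h

theorem IsLimitKeyPoly.exists_truncVal_eq (hQn : IsLimitKeyPoly w wbar n Qn) {f : K[X]}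
    (hf : f.degree < Qn.degree) : ∃ Q ∈ Psi wbar n, truncVal w Q f = w.v f := by
  have hf_notMem : ¬ ∀ Q ∈ Psi wbar n, truncVal w Q f < w.v f := fun hmem =>
    (hQn.2.2 f hmem).not_gt hf
  push Not at hf_notMem
  obtain ⟨Q, hQ, hle⟩ := hf_notMem
  exact ⟨Q, hQ, (truncVal_le_of_mem_Psi hQn.pos hQ f).antisymm hle⟩

end KeyPolynomials

theorem small_degree_implies_stable_general
    {K : Type*} [Field K] {Γ : Type*} [AddCommGroup Γ] [LinearOrder Γ] [IsOrderedAddMonoid Γ]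
    (w : ValOn (Polynomial K) Γ)
    (wbar : ValOn (Polynomial (AlgebraicClosure K)) Γ)
    (n : ℕ)
    (Qn : Polynomial K) (hQn : IsLimitKeyPoly w wbar n Qn) :
    ∀ f : Polynomial K, f.degree < Qn.degree →
      ∃ Qf ∈ Psi wbar n, truncVal w Qf f = truncVal w Qn f ∧ truncVal w Qn f = w.v f ∧
        ∀ Q ∈ Psi wbar n, (∀ g : Polynomial K, truncVal w Qf g ≤ truncVal w Q g) →
          truncVal w Q f = truncVal w Qf f := by
  intro f hf
  obtain ⟨Qf, hQf, hQf_eq⟩ := hQn.exists_truncVal_eq hf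
  have hQn_eq : truncVal w Qn f = w.v f := truncVal_of_degree_lt w hQn.1 hf
  refine ⟨Qf, hQf, hQf_eq.trans hQn_eq.symm, hQn_eq, fun Q hQ hle => ?_⟩
  exact (hQf_eq ▸ truncVal_le_of_mem_Psi hQn.pos hQ f).antisymm (hle f)

/-- If `deg f < deg Q_n`, then there is `Q_f ∈ Ψ_n` with
`ν_{Q_f}(f) = ν_{Q_n}(f) = ν(f)`, and `ν_Q(f) = ν_{Q_f}(f)` for every `Q ∈ Ψ_n`
with `ν_{Q_f} ≤ ν_Q`. -/
theorem small_degree_implies_stable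
    {K : Type*} [Field K] {Γ : Type*} [AddCommGroup Γ] [LinearOrder Γ] [IsOrderedAddMonoid Γ]
    (w : ValOn (Polynomial K) Γ)
    (wbar : ValOn (Polynomial (AlgebraicClosure K)) Γ)
    (hbar : ∀ f : Polynomial K, wbar.v (f.map (algebraMap K (AlgebraicClosure K))) = w.v f)
    (n : ℕ) (hne : ∃ Q : Polynomial K, Q ∈ Psi wbar n)
    (hnomax : ∀ Q ∈ Psi wbar n, ∃ Q' ∈ Psi wbar n, w.v Q < w.v Q')
    (Qn : Polynomial K) (hQn : IsLimitKeyPoly w wbar n Qn) :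
    ∀ f : Polynomial K, f.degree < Qn.degree →
      ∃ Qf ∈ Psi wbar n, truncVal w Qf f = truncVal w Qn f ∧ truncVal w Qn f = w.v f ∧
        ∀ Q ∈ Psi wbar n, (∀ g : Polynomial K, truncVal w Qf g ≤ truncVal w Q g) →
          truncVal w Q f = truncVal w Qf f :=
  small_degree_implies_stable_general w wbar n Qn hQn
end
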